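/- arXiv:2101.06039 — 2 statements merged into one kernel-verified Lean document; each statement's English description precedes it below -/
import Mathlib

section
/- Let E and E' be types, step : E → E → Prop, d' : E' → E' → Prop, and M : E → E' → Prop. Assume the backward-preservation step law: for all a b : E with step a b, and for every b' : E' with M b b', there exists a' : E' with M a a' and b' reachable from a' by the reflexive-transitive closure of d'. Let es : List E be a nonempty list that is a chain for step, and assume there exists e' with M (es.getLast) e'. Then for all indices i ≤ j < es.length, there exist a' and b' in E' such that M (es.get i) a', M (es.get j) b', and b' is reachable from a' by the reflexive-transitive closure of d'. In particular every element of es has an image under M. (This is the abstract core of the paper's Theorem 'Observation protection' and of condition (iii) in its Lemmas on monolithic, decoupled and observation-opacification preservation: when observation events are organized along an opaque chain terminating in a transformation-preserved event, every observation event on the chain is preserved, and the happens-before ordering between any two observation events on the chain is preserved in the transformed program.) -/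
open Relation

/-- The paper's law (1) for opaque expression preservation, for one step `r a b`. -/
def BackwardPreserves {α β : Type*} (r : α → α → Prop) (s : β → β → Prop) (M : α → β → Prop) :
    Prop :=
  ∀ a b, r a b → ∀ b', M b b' → ∃ a', M a a' ∧ ReflTransGen s a' b'

theorem BackwardPreserves.reflTransGen {α β : Type*} {r : α → α → Prop} {s : β → β → Prop}
    {M : α → β → Prop} (hM : BackwardPreserves r s M) : BackwardPreserves (ReflTransGen r) s M := by
  intro a b hab
  induction hab using ReflTransGen.head_induction_on with
  | refl => exact fun b' hb' => ⟨b', hb', .refl⟩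
  | head hac _ ih =>
    intro b' hb'
    obtain ⟨c', hc', hcb⟩ := ih b' hb'
    obtain ⟨a', ha', hac'⟩ := hM _ _ hac c' hc'
    exact ⟨a', ha', hac'.trans hcb⟩

theorem List.IsChain.pairwise_reflTransGen {α : Type*} {r : α → α → Prop} {l : List α}
    (hl : l.IsChain r) : l.Pairwise (ReflTransGen r) :=
  List.isChain_iff_pairwise.mp (hl.imp fun _ _ => ReflTransGen.single)

/-- Abstract core of the theorem "Observation protection": along an opaque
chain whose last event is preserved, every event is preserved and the
happens-before ordering between any two events on the chain is reproduced
as a dependence chain between their images. -/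
theorem observation_protection {E E' : Type*}
    (step : E → E → Prop) (d' : E' → E' → Prop) (M : E → E' → Prop)
    (hstep : ∀ a b : E, step a b → ∀ b' : E', M b b' →
      ∃ a' : E', M a a' ∧ Relation.ReflTransGen d' a' b')
    (es : List E) (h : es ≠ []) (hchain : es.Chain' step)
    (hlast : ∃ e' : E', M (es.getLast h) e') :
    (∀ i j : Fin es.length, i ≤ j →
      ∃ a' b' : E', M (es.get i) a' ∧ M (es.get j) b' ∧
        Relation.ReflTransGen d' a' b') ∧
    (∀ e ∈ es, ∃ e' : E', M e e') := by
  have hpres : BackwardPreserves (ReflTransGen step) d' M := BackwardPreserves.reflTransGen hstep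
  have hord : es.Pairwise (ReflTransGen step) := List.IsChain.pairwise_reflTransGen hchain
  obtain ⟨e', he'⟩ := hlast
  have himg : ∀ e ∈ es, ∃ e' : E', M e e' := fun e he =>
    (hpres _ _ (hord.rel_getLast he) e' he').imp fun _ => And.left
  refine ⟨fun i j hij => ?_, himg⟩
  obtain ⟨b', hb'⟩ := himg _ (List.get_mem es j)
  obtain ⟨a', ha', hab'⟩ := hpres _ _ (hord.rel_get_of_le hij) b' hb'
  exact ⟨a', b', ha', hb', hab'⟩
end

section
/- Let n be a positive natural number, w : ℕ, tab : Fin n → BitVec w a lookup table, and idx : Fin n a secret index. For each i : Fin n define the bitmask m i : BitVec w := 0 - (if i = idx then 1 else 0). Then the bitwise OR over all i : Fin n of (tab i &&& m i) equals tab idx; formally, folding the operation (· ||| ·) with initial value 0 over the family (fun i => tab i &&& m i) on Finset.univ yields tab idx. (This is the functional-correctness claim underlying the paper's constant-time table lookup ct_select_lookup: scanning the whole table and accumulating each entry masked by an arithmetic equality mask returns exactly the entry at the secret index, without any branch or memory access pattern depending on idx.) -/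
instance bitVecOrComm (w : ℕ) : Std.Commutative (α := BitVec w) (· ||| ·) :=
  ⟨fun a b => BitVec.or_comm a b⟩

instance bitVecOrAssoc (w : ℕ) : Std.Associative (α := BitVec w) (· ||| ·) :=
  ⟨fun a b c => BitVec.or_assoc a b c⟩

theorem Finset.fold_eq_single_of_mem {α β : Type*} {op : β → β → β} [Std.Commutative op]
    [Std.Associative op] {b : β} (hb : ∀ x, op x b = x) {f : α → β} {s : Finset α} {a : α}
    (ha : a ∈ s) (hf : ∀ x ∈ s, x ≠ a → f x = b) : s.fold op b f = f a := by
  classical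
  have hrest : (s.erase a).fold op b f = b := by
    rw [fold_congr (g := fun _ => b) fun x hx =>
      hf x (mem_of_mem_erase hx) (ne_of_mem_erase hx)]
    induction s.erase a using Finset.induction with
    | empty => rfl
    | insert _ _ h ih => rw [fold_insert h, ih, hb]
  rw [← insert_erase ha, fold_insert (notMem_erase a s), hrest, hb]

theorem BitVec.and_zero_sub_ite {w : ℕ} (x : BitVec w) (p : Prop) [Decidable p] :
    x &&& (0 - if p then 1 else 0) = if p then x else 0 := by
  split_ifs <;> simp [BitVec.neg_one_eq_allOnes]

theorem ct_select_lookup_correct_general (n : ℕ) (w : ℕ)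
    (tab : Fin n → BitVec w) (idx : Fin n) :
    Finset.univ.fold (· ||| ·) (0 : BitVec w)
      (fun i : Fin n => tab i &&& (0 - (if i = idx then 1 else 0))) = tab idx := by
  simp only [BitVec.and_zero_sub_ite]
  exact (Finset.fold_eq_single_of_mem (fun _ => BitVec.or_zero) (Finset.mem_univ idx)
    fun i _ hi => if_neg hi).trans (if_pos rfl)

/-- Functional correctness of the constant-time table lookup
`ct_select_lookup`: OR-accumulating every table entry masked by the arithmetic
equality mask m i = 0 - (i == idx) returns exactly the entry at the secret
index. -/
theorem ct_select_lookup_correct (n : ℕ) (hn : 0 < n) (w : ℕ)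
    (tab : Fin n → BitVec w) (idx : Fin n) :
    Finset.univ.fold (· ||| ·) (0 : BitVec w)
      (fun i : Fin n => tab i &&& (0 - (if i = idx then 1 else 0))) = tab idx :=
  ct_select_lookup_correct_general n w tab idx
end
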